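/- With n(N), κ(N), λ(N) ∈ [0,∞) satisfying n(N)/N → ρ ∈ (0,∞), κ(N)/N → κ, λ(N)/N → λ as N → ∞, the normalization constant Z(N) := ∏_{j=1}^{n(N)} Γ(j+1)Γ(j+κ(N))Γ(j+λ(N))/Γ(j+n(N)+κ(N)+λ(N)) satisfies lim_{N→∞} (1/N²) log Z(N) = ρ² B(κ/ρ, λ/ρ), where B(s,t) = (1+s)²/2·log(1+s) − s²/2·log s + (1+t)²/2·log(1+t) − t²/2·log t − (2+s+t)²/2·log(2+s+t) + (1+s+t)²/2·log(1+s+t). -/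

import Mathlib

/-!
For `x ≥ 1`, `log Γ(x) = L(x) + O(log x)` with `L(x) = x log x - x`: Stirling's bounds for `n!`
and the monotonicity of `Γ` on `[2, ∞)` squeeze `Γ(x + 1)` between `⌊x⌋!` and `(⌊x⌋ + 1)!`.
Hence, up to `o(N²)`, `log Z(N)` is the signed sum of the four sums `∑_{j ≤ n} L(j + a)` with
shifts `a = 1, κ, λ, n + κ + λ`. Rescaling, `L(j + a) = N L((j + a)/N) + (j + a) log N`; the
`log N` terms add up to `2 n log N = o(N²)`, and `(1/N) ∑_j L((j + a)/N)` is a Riemann sum tending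
to `Φ(ρ + α) - Φ(α)`, where `α = lim a/N` and `Φ(x) = x²/2 log x - 3x²/4` is a primitive of `L`.
Since `Φ(ρ y) = ρ² (Φ(y) + y²/2 log ρ)`, the four differences of `Φ` combine to `ρ² B(κ/ρ, λ/ρ)`.
-/

open Real Filter Set

noncomputable def logAntideriv (x : ℝ) : ℝ := x * log x - x

noncomputable def logAntideriv2 (x : ℝ) : ℝ := x ^ 2 / 2 * log x - 3 * x ^ 2 / 4

lemma continuous_logAntideriv : Continuous logAntideriv :=
  continuous_mul_log.sub continuous_id

lemma continuous_logAntideriv2 : Continuous logAntideriv2 := by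
  have h : logAntideriv2 = fun x => x / 2 * (x * log x) - 3 * x ^ 2 / 4 := by
    ext x; simp only [logAntideriv2]; ring
  rw [h]
  fun_prop

lemma hasDerivAt_logAntideriv2 {x : ℝ} (hx : x ≠ 0) :
    HasDerivAt logAntideriv2 (logAntideriv x) x := by
  have h := (((hasDerivAt_pow 2 x).div_const 2).mul (hasDerivAt_log hx)).sub
    (((hasDerivAt_pow 2 x).const_mul 3).div_const 4)
  exact h.congr_deriv (by simp only [logAntideriv]; field_simp; ring)

lemma logAntideriv_mul {c : ℝ} (hc : c ≠ 0) (y : ℝ) :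
    logAntideriv (c * y) = c * (logAntideriv y + y * log c) := by
  rcases eq_or_ne y 0 with rfl | hy
  · simp [logAntideriv]
  · simp only [logAntideriv, log_mul hc hy]
    ring

lemma logAntideriv2_mul {c : ℝ} (hc : c ≠ 0) (y : ℝ) :
    logAntideriv2 (c * y) = c ^ 2 * (logAntideriv2 y + y ^ 2 / 2 * log c) := by
  rcases eq_or_ne y 0 with rfl | hy
  · simp [logAntideriv2]
  · simp only [logAntideriv2, log_mul hc hy]
    ring

lemma logAntideriv_sub_le {a b : ℝ} (ha : 0 < a) (hab : a ≤ b) :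
    logAntideriv b - logAntideriv a ≤ (b - a) * log b := by
  have hb : 0 < b := ha.trans_le hab
  have h := log_le_sub_one_of_pos (div_pos hb ha)
  rw [log_div hb.ne' ha.ne'] at h
  have h' := mul_le_mul_of_nonneg_left h ha.le
  simp only [logAntideriv]
  field_simp at h'
  nlinarith

lemma logAntideriv_le_log_factorial (n : ℕ) : logAntideriv n ≤ log n.factorial := by
  rcases eq_or_ne n 0 with rfl | hn
  · simp [logAntideriv]
  have h := Stirling.le_log_factorial_stirling hn
  have : 0 ≤ log (2 * π) := log_nonneg (by linarith [pi_gt_three])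
  have : 0 ≤ log (n : ℝ) := log_natCast_nonneg n
  simp only [logAntideriv]
  linarith

lemma log_factorial_le {n : ℕ} (hn : n ≠ 0) :
    log n.factorial ≤ logAntideriv n + log n / 2 + 1 := by
  obtain ⟨m, rfl⟩ := Nat.exists_eq_succ_of_ne_zero hn
  have h := Stirling.log_stirlingSeq'_antitone (Nat.zero_le m)
  simp only [Function.comp_apply, Nat.succ_eq_add_one, zero_add, Stirling.stirlingSeq_one,
    Stirling.log_stirlingSeq_formula] at h
  rw [log_div (exp_pos 1).ne' (by positivity), log_exp, log_sqrt (by norm_num)] at h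
  have hm : (0 : ℝ) < (m + 1 : ℕ) := by positivity
  rw [log_div hm.ne' (exp_pos 1).ne', log_exp, log_mul (by norm_num) hm.ne'] at h
  simp only [logAntideriv]
  linarith

lemma abs_log_Gamma_sub_logAntideriv_le {x : ℝ} (hx : 1 ≤ x) :
    |log (Gamma x) - logAntideriv x| ≤ 2 * log (x + 1) + 1 := by
  set n := ⌊x⌋₊
  have hn1 : (1 : ℝ) ≤ n := by exact_mod_cast Nat.le_floor (by simpa using hx)
  have hnx : (n : ℝ) ≤ x := Nat.floor_le (by linarith)
  have hxn : x < n + 1 := Nat.lt_floor_add_one x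
  have hGamma : log (Gamma x) = log (Gamma (x + 1)) - log x := by
    rw [Gamma_add_one (by linarith), log_mul (by linarith) (Gamma_pos_of_pos (by linarith)).ne']
    ring
  have hmono := Gamma_strictMonoOn_Ici.monotoneOn
  have hlow : log n.factorial ≤ log (Gamma (x + 1)) := by
    rw [← Gamma_nat_eq_factorial]
    exact log_le_log (Gamma_pos_of_pos (by positivity))
      (hmono (mem_Ici.2 (by linarith)) (mem_Ici.2 (by linarith)) (by linarith))
  have hupp : log (Gamma (x + 1)) ≤ log (n + 1).factorial := by
    rw [← Gamma_nat_eq_factorial, Nat.cast_add_one]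
    exact log_le_log (Gamma_pos_of_pos (by linarith))
      (hmono (mem_Ici.2 (by linarith)) (mem_Ici.2 (by linarith)) (by linarith))
  have h1 := logAntideriv_le_log_factorial n
  have h2 := log_factorial_le (Nat.succ_ne_zero n)
  rw [Nat.cast_add_one] at h2
  have h3 := logAntideriv_sub_le (by positivity) hnx
  have h4 := logAntideriv_sub_le (by linarith) hxn.le
  have h5 : (x - n) * log x ≤ log x := mul_le_of_le_one_left (log_nonneg hx) (by linarith)
  have h6 : (n + 1 - x) * log (n + 1) ≤ log (n + 1) :=
    mul_le_of_le_one_left (log_nonneg (by linarith)) (by linarith)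
  have h7 : log (n + 1) ≤ log (x + 1) := log_le_log (by positivity) (by linarith)
  have h8 : log x ≤ log (x + 1) := log_le_log (by linarith) (by linarith)
  rw [abs_le]
  constructor <;> linarith [log_nonneg hx]

lemma abs_mul_sub_sub_le_of_hasDerivAt {f F : ℝ → ℝ} {u v ε : ℝ} (huv : u < v)
    (hF : ContinuousOn F (Icc u v)) (hFf : ∀ x ∈ Ioo u v, HasDerivAt F (f x) x)
    (hf : ∀ c ∈ Icc u v, |f v - f c| ≤ ε) :
    |(v - u) * f v - (F v - F u)| ≤ (v - u) * ε := by
  obtain ⟨c, hc, hslope⟩ := exists_hasDerivAt_eq_slope F f huv hF hFf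
  rw [eq_div_iff (sub_pos.2 huv).ne'] at hslope
  rw [← hslope, mul_comm (f c), ← mul_sub, abs_mul, abs_of_pos (sub_pos.2 huv)]
  exact mul_le_mul_of_nonneg_left (hf c (Ioo_subset_Icc_self hc)) (sub_pos.2 huv).le

lemma abs_riemann_sum_sub_le {f F : ℝ → ℝ} (hF : Continuous F)
    (hFf : ∀ x, 0 < x → HasDerivAt F (f x) x) {N a M η : ℝ} (hN : 0 < N) (ha : 0 ≤ a)
    {m : ℕ} (hM : (m + a) / N ≤ M)
    (hf : ∀ x ∈ Icc 0 M, ∀ y ∈ Icc 0 M, |x - y| ≤ 1 / N → |f x - f y| ≤ η) :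
    |1 / N * ∑ i ∈ Finset.range m, f ((i + 1 + a) / N) - (F ((m + a) / N) - F (a / N))|
      ≤ m / N * η := by
  have htel := Finset.sum_range_sub (fun i : ℕ => F ((i + a) / N)) m
  push_cast at htel
  rw [zero_add] at htel
  rw [← htel, Finset.mul_sum, ← Finset.sum_sub_distrib]
  have hterm : ∀ i ∈ Finset.range m,
      |1 / N * f ((i + 1 + a) / N) - (F ((i + 1 + a) / N) - F ((i + a) / N))| ≤ 1 / N * η := by
    intro i hi
    have hi : (i : ℝ) + 1 ≤ m := by exact_mod_cast Finset.mem_range.1 hi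
    have hu : 0 ≤ (i + a) / N := by positivity
    have hvu : (i + 1 + a) / N - (i + a) / N = 1 / N := by field_simp; ring
    have hvM : (i + 1 + a) / N ≤ M := le_trans (by gcongr) hM
    have key := abs_mul_sub_sub_le_of_hasDerivAt (f := f) (F := F) (ε := η)
      (u := (i + a) / N) (v := (i + 1 + a) / N) (by linarith [one_div_pos.2 hN]) hF.continuousOn
      (fun x hx => hFf x (hu.trans_lt hx.1)) (fun c hc => by
        refine hf _ ⟨by linarith [hc.1, hc.2], hvM⟩ c ⟨hu.trans hc.1, hc.2.trans hvM⟩ ?_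
        rw [abs_of_nonneg (by linarith [hc.2])]
        linarith [hc.1])
    rwa [hvu] at key
  calc _ ≤ ∑ i ∈ Finset.range m, 1 / N * η :=
        (Finset.abs_sum_le_sum_abs _ _).trans (Finset.sum_le_sum hterm)
    _ = m / N * η := by rw [Finset.sum_const, Finset.card_range, nsmul_eq_mul]; ring

theorem tendsto_riemann_sum {f F : ℝ → ℝ} (hf : Continuous f) (hF : Continuous F)
    (hFf : ∀ x, 0 < x → HasDerivAt F (f x) x) {m : ℕ → ℕ} {a : ℕ → ℝ} (ha : ∀ N, 0 ≤ a N)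
    {ρ α : ℝ} (hm : Tendsto (fun N : ℕ => (m N : ℝ) / N) atTop (nhds ρ))
    (haα : Tendsto (fun N : ℕ => a N / N) atTop (nhds α)) :
    Tendsto (fun N : ℕ => (1 / (N : ℝ)) * ∑ i ∈ Finset.range (m N), f ((i + 1 + a N) / N))
      atTop (nhds (F (ρ + α) - F α)) := by
  have hsum : Tendsto (fun N : ℕ => ((m N : ℝ) + a N) / N) atTop (nhds (ρ + α)) := by
    simpa only [add_div] using hm.add haα
  have hend := ((hF.tendsto _).comp hsum).sub ((hF.tendsto _).comp haα)
  suffices herr : Tendsto (fun N : ℕ => (1 / (N : ℝ)) * ∑ i ∈ Finset.range (m N),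
      f ((i + 1 + a N) / N) - (F ((m N + a N) / N) - F (a N / N))) atTop (nhds 0) by
    simpa using herr.add hend
  have hρ : 0 ≤ ρ := ge_of_tendsto' hm fun N => by positivity
  rw [Metric.tendsto_nhds]
  intro ε hε
  obtain ⟨δ, hδ, hfδ⟩ := Metric.uniformContinuousOn_iff.1
    ((isCompact_Icc (a := (0 : ℝ)) (b := ρ + α + 1)).uniformContinuousOn_of_continuous
      hf.continuousOn) (ε / (ρ + 2)) (by positivity)
  filter_upwards [hsum.eventually_lt_const (lt_add_one (ρ + α)),
    hm.eventually_lt_const (lt_add_one ρ),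
    tendsto_one_div_atTop_nhds_zero_nat.eventually_lt_const hδ,
    eventually_ge_atTop 1] with N hM hmN hNδ hN1
  have hN : (0 : ℝ) < N := by exact_mod_cast hN1
  rw [Real.dist_eq, sub_zero]
  calc _ ≤ m N / N * (ε / (ρ + 2)) := abs_riemann_sum_sub_le hF hFf hN (ha N) hM.le
        fun x hx y hy hxy => (hfδ x hx y hy (by rw [Real.dist_eq]; linarith)).le
    _ ≤ (ρ + 1) * (ε / (ρ + 2)) := by gcongr
    _ < ε := by
        rw [← mul_div_assoc, div_lt_iff₀ (by positivity)]
        nlinarith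

lemma tendsto_log_natCast_div_natCast :
    Tendsto (fun N : ℕ => log N / N) atTop (nhds 0) := by
  have h := (tendsto_pow_log_div_mul_add_atTop 1 0 1 one_ne_zero).comp
    (tendsto_natCast_atTop_atTop (R := ℝ))
  simpa [Function.comp_def] using h

lemma tendsto_log_add_one_div {b : ℕ → ℝ} (hb : ∀ N, 0 ≤ b N) {β : ℝ}
    (hβ : Tendsto (fun N : ℕ => b N / N) atTop (nhds β)) :
    Tendsto (fun N : ℕ => log (b N + 1) / N) atTop (nhds 0) := by
  have hβ0 : 0 ≤ β := ge_of_tendsto' hβ fun N => div_nonneg (hb N) N.cast_nonneg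
  have hlog : Tendsto (fun N : ℕ => log (β + 2) * (1 / (N : ℝ)) + log N / N) atTop (nhds 0) := by
    simpa using (tendsto_one_div_atTop_nhds_zero_nat.const_mul (log (β + 2))).add
      tendsto_log_natCast_div_natCast
  refine squeeze_zero' (Eventually.of_forall fun N =>
    div_nonneg (log_nonneg (by linarith [hb N])) N.cast_nonneg) ?_ hlog
  filter_upwards [hβ.eventually_lt_const (lt_add_one β), eventually_ge_atTop 1] with N hbN hN1
  have hN : (0 : ℝ) < N := by exact_mod_cast hN1
  rw [div_lt_iff₀ hN] at hbN
  have hle : log (b N + 1) ≤ log (β + 2) + log N := by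
    rw [← log_mul (by linarith) hN.ne']
    exact log_le_log (by linarith [hb N]) (by nlinarith [(Nat.one_le_cast (α := ℝ)).2 hN1])
  calc log (b N + 1) / N ≤ (log (β + 2) + log N) / N := by gcongr
    _ = _ := by ring

lemma tendsto_sum_log_Gamma_sub_logAntideriv {n : ℕ → ℕ} {a : ℕ → ℝ} (ha : ∀ N, 0 ≤ a N)
    {ρ α : ℝ} (hn : Tendsto (fun N : ℕ => (n N : ℝ) / N) atTop (nhds ρ))
    (haα : Tendsto (fun N : ℕ => a N / N) atTop (nhds α)) :
    Tendsto (fun N : ℕ => (∑ j ∈ Finset.Icc 1 (n N),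
      (log (Gamma (j + a N)) - logAntideriv (j + a N))) / (N : ℝ) ^ 2) atTop (nhds 0) := by
  have hbound : Tendsto (fun N : ℕ => (n N : ℝ) / N *
      (2 * (log (n N + a N + 1) / N) + 1 / (N : ℝ))) atTop (nhds 0) := by
    have hsum : Tendsto (fun N : ℕ => ((n N : ℝ) + a N) / N) atTop (nhds (ρ + α)) := by
      simpa only [add_div] using hn.add haα
    have h := (tendsto_log_add_one_div (fun N => by have := ha N; positivity) hsum).const_mul 2
    simpa using hn.mul (h.add tendsto_one_div_atTop_nhds_zero_nat)
  refine squeeze_zero_norm (fun N => ?_) hbound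
  have hterm : ∀ j ∈ Finset.Icc 1 (n N),
      ‖log (Gamma (j + a N)) - logAntideriv (j + a N)‖ ≤ 2 * log (n N + a N + 1) + 1 := by
    intro j hj
    have hj1 : (1 : ℝ) ≤ j := by exact_mod_cast (Finset.mem_Icc.1 hj).1
    have hjn : (j : ℝ) ≤ n N := by exact_mod_cast (Finset.mem_Icc.1 hj).2
    have := ha N
    refine (abs_log_Gamma_sub_logAntideriv_le (by linarith)).trans ?_
    gcongr
  rw [norm_div, norm_pow, Real.norm_natCast]
  rcases (N.cast_nonneg (α := ℝ)).eq_or_lt with hN | hN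
  · simp [← hN]
  calc _ ≤ (n N : ℝ) * (2 * log (n N + a N + 1) + 1) / (N : ℝ) ^ 2 := by
        gcongr
        simpa [mul_add] using norm_sum_le_of_le _ hterm
    _ = _ := by field_simp

lemma sum_Icc_one_eq_sum_range {M : Type*} [AddCommMonoid M] (f : ℕ → M) (n : ℕ) :
    ∑ j ∈ Finset.Icc 1 n, f j = ∑ i ∈ Finset.range n, f (i + 1) := by
  rw [← Finset.Ico_add_one_right_eq_Icc, Finset.sum_Ico_eq_sum_range, add_tsub_cancel_right]
  simp only [add_comm]

lemma tendsto_sum_log_Gamma_add {n : ℕ → ℕ} {a : ℕ → ℝ} (ha : ∀ N, 0 ≤ a N)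
    {ρ α : ℝ} (hn : Tendsto (fun N : ℕ => (n N : ℝ) / N) atTop (nhds ρ))
    (haα : Tendsto (fun N : ℕ => a N / N) atTop (nhds α)) :
    Tendsto (fun N : ℕ => (∑ j ∈ Finset.Icc 1 (n N), log (Gamma (j + a N))
        - log N * ∑ j ∈ Finset.Icc 1 (n N), ((j : ℝ) + a N)) / (N : ℝ) ^ 2)
      atTop (nhds (logAntideriv2 (ρ + α) - logAntideriv2 α)) := by
  have hR := tendsto_riemann_sum continuous_logAntideriv continuous_logAntideriv2
    (fun x hx => hasDerivAt_logAntideriv2 hx.ne') ha hn haα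
  have hE := tendsto_sum_log_Gamma_sub_logAntideriv ha hn haα
  rw [← zero_add (_ - _)]
  refine (hE.add hR).congr' ?_
  filter_upwards [eventually_ge_atTop 1] with N hN1
  have hN : (N : ℝ) ≠ 0 := by positivity
  have hscale : ∀ j : ℕ, logAntideriv (j + a N)
      = N * logAntideriv ((j + a N) / N) + (j + a N) * log N := fun j => by
    have h := logAntideriv_mul hN ((j + a N) / N)
    rw [mul_div_cancel₀ _ hN] at h
    rw [h]
    field_simp
  have hshift := sum_Icc_one_eq_sum_range (fun j : ℕ => logAntideriv ((j + a N) / N)) (n N)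
  push_cast at hshift
  simp only [Finset.sum_sub_distrib, hscale, Finset.sum_add_distrib, ← Finset.mul_sum,
    ← Finset.sum_mul, hshift]
  field_simp
  ring

lemma log_prod_Gamma_ratio (n : ℕ) {κ lam : ℝ} (hκ : 0 ≤ κ) (hlam : 0 ≤ lam) :
    log (∏ j ∈ Finset.Icc 1 n,
        Gamma (j + 1) * Gamma (j + κ) * Gamma (j + lam) / Gamma (j + n + κ + lam))
      = ∑ j ∈ Finset.Icc 1 n, log (Gamma (j + 1)) + ∑ j ∈ Finset.Icc 1 n, log (Gamma (j + κ))
        + ∑ j ∈ Finset.Icc 1 n, log (Gamma (j + lam))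
        - ∑ j ∈ Finset.Icc 1 n, log (Gamma (j + (n + κ + lam))) := by
  have hΓ : ∀ j ∈ Finset.Icc 1 n, 0 < Gamma (j + 1) ∧ 0 < Gamma (j + κ) ∧ 0 < Gamma (j + lam)
      ∧ 0 < Gamma (j + (n + κ + lam)) := fun j hj => by
    have : (1 : ℝ) ≤ j := by exact_mod_cast (Finset.mem_Icc.1 hj).1
    refine ⟨?_, ?_, ?_, ?_⟩ <;> exact Gamma_pos_of_pos (by positivity)
  simp only [show ∀ j : ℕ, (j : ℝ) + n + κ + lam = j + (n + κ + lam) from fun j => by ring]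
  rw [log_prod fun j hj => by obtain ⟨h1, h2, h3, h4⟩ := hΓ j hj; positivity]
  simp only [← Finset.sum_add_distrib, ← Finset.sum_sub_distrib]
  refine Finset.sum_congr rfl fun j hj => ?_
  obtain ⟨h1, h2, h3, h4⟩ := hΓ j hj
  rw [log_div (by positivity) h4.ne', log_mul (by positivity) h3.ne', log_mul h1.ne' h2.ne']

lemma sum_Icc_shifts_eq (n : ℕ) (κ lam : ℝ) :
    ∑ j ∈ Finset.Icc 1 n, ((j : ℝ) + 1) + ∑ j ∈ Finset.Icc 1 n, ((j : ℝ) + κ)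
      + ∑ j ∈ Finset.Icc 1 n, ((j : ℝ) + lam)
      - ∑ j ∈ Finset.Icc 1 n, ((j : ℝ) + (n + κ + lam)) = 2 * n := by
  have hgauss : ∑ j ∈ Finset.Icc 1 n, (j : ℝ) = n * (n + 1) / 2 := by
    induction n with
    | zero => simp
    | succ m ih =>
      rw [Finset.sum_Icc_succ_top (by omega), ih]
      push_cast
      ring
  simp only [Finset.sum_add_distrib, Finset.sum_const, Nat.card_Icc, nsmul_eq_mul, hgauss]
  push_cast
  ring

lemma logAntideriv2_shifts_eq {ρ : ℝ} (hρ : ρ ≠ 0) (κ lam : ℝ) :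
    logAntideriv2 (ρ + 0) - logAntideriv2 0 + (logAntideriv2 (ρ + κ) - logAntideriv2 κ)
      + (logAntideriv2 (ρ + lam) - logAntideriv2 lam)
      - (logAntideriv2 (ρ + (ρ + κ + lam)) - logAntideriv2 (ρ + κ + lam))
    = ρ ^ 2 * ((1 + κ / ρ) ^ 2 / 2 * log (1 + κ / ρ) - (κ / ρ) ^ 2 / 2 * log (κ / ρ)
        + (1 + lam / ρ) ^ 2 / 2 * log (1 + lam / ρ) - (lam / ρ) ^ 2 / 2 * log (lam / ρ)
        - (2 + κ / ρ + lam / ρ) ^ 2 / 2 * log (2 + κ / ρ + lam / ρ)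
        + (1 + κ / ρ + lam / ρ) ^ 2 / 2 * log (1 + κ / ρ + lam / ρ)) := by
  set s := κ / ρ
  set t := lam / ρ
  have hs : κ = ρ * s := by simp [s, mul_div_cancel₀ _ hρ]
  have ht : lam = ρ * t := by simp [t, mul_div_cancel₀ _ hρ]
  have e1 : ρ + (ρ + κ + lam) = ρ * (2 + s + t) := by rw [hs, ht]; ring
  have e2 : ρ + κ + lam = ρ * (1 + s + t) := by rw [hs, ht]; ring
  have e3 : ρ + κ = ρ * (1 + s) := by rw [hs]; ring
  have e4 : ρ + lam = ρ * (1 + t) := by rw [ht]; ring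
  have e5 : ρ + 0 = ρ * 1 := by ring
  have e6 : (0 : ℝ) = ρ * 0 := by ring
  rw [e1, e2, e3, e4, hs, ht, e5, e6]
  simp only [logAntideriv2_mul hρ]
  simp only [logAntideriv2, log_one, log_zero]
  ring

theorem stmt7_general (n : ℕ → ℕ) (κ lam : ℕ → ℝ) (hκ0 : ∀ N, 0 ≤ κ N) (hlam0 : ∀ N, 0 ≤ lam N)
    (ρ κL lamL : ℝ) (hρ : 0 < ρ)
    (hn : Tendsto (fun N => (n N : ℝ) / N) atTop (nhds ρ))
    (hκ : Tendsto (fun N => κ N / N) atTop (nhds κL))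
    (hlam : Tendsto (fun N => lam N / N) atTop (nhds lamL))
    (Z : ℕ → ℝ)
    (hZ : ∀ N, Z N = ∏ j ∈ Finset.Icc 1 (n N),
        Real.Gamma (j + 1) * Real.Gamma (j + κ N) * Real.Gamma (j + lam N) /
          Real.Gamma (j + n N + κ N + lam N))
    (B : ℝ → ℝ → ℝ)
    (hB : ∀ s t, B s t =
        (1 + s) ^ 2 / 2 * Real.log (1 + s) - s ^ 2 / 2 * Real.log s
          + (1 + t) ^ 2 / 2 * Real.log (1 + t) - t ^ 2 / 2 * Real.log t
          - (2 + s + t) ^ 2 / 2 * Real.log (2 + s + t)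
          + (1 + s + t) ^ 2 / 2 * Real.log (1 + s + t)) :
    Tendsto (fun N : ℕ => (1 / (N : ℝ) ^ 2) * Real.log (Z N)) atTop
      (nhds (ρ ^ 2 * B (κL / ρ) (lamL / ρ))) := by
  have h1 := tendsto_sum_log_Gamma_add (a := fun _ => 1) (fun _ => zero_le_one) hn
    (by simpa using tendsto_one_div_atTop_nhds_zero_nat (𝕜 := ℝ))
  have h2 := tendsto_sum_log_Gamma_add hκ0 hn hκ
  have h3 := tendsto_sum_log_Gamma_add hlam0 hn hlam
  have h4 := tendsto_sum_log_Gamma_add (a := fun N => n N + κ N + lam N)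
    (fun N => by have := hκ0 N; have := hlam0 N; positivity) hn
    (by simpa only [add_div] using (hn.add hκ).add hlam)
  -- The `log N` corrections of the four shifts add up to `2 n log N = o(N²)`.
  have hlin := (hn.const_mul 2).mul tendsto_log_natCast_div_natCast
  have hlim := (((h1.add h2).add h3).sub h4).add hlin
  rw [mul_zero, add_zero] at hlim
  rw [hB, ← logAntideriv2_shifts_eq hρ.ne']
  refine hlim.congr' ?_
  filter_upwards [eventually_ge_atTop 1] with N hN1
  have hN : (N : ℝ) ≠ 0 := by positivity
  have hlog : 2 * ((n N : ℝ) / N) * (log N / N) = log N * (2 * n N) / (N : ℝ) ^ 2 := by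
    field_simp
  rw [hZ, log_prod_Gamma_ratio _ (hκ0 N) (hlam0 N), hlog, ← sum_Icc_shifts_eq (n N) (κ N) (lam N)]
  ring

/-- Asymptotics of the Selberg normalization constant:
`(1/N²) log Z(N) → ρ² B(κ/ρ, λ/ρ)`. -/
theorem stmt7 (n : ℕ → ℕ) (κ lam : ℕ → ℝ) (hκ0 : ∀ N, 0 ≤ κ N) (hlam0 : ∀ N, 0 ≤ lam N)
    (ρ κL lamL : ℝ) (hρ : 0 < ρ) (hκL : 0 ≤ κL) (hlamL : 0 ≤ lamL)
    (hn : Tendsto (fun N => (n N : ℝ) / N) atTop (nhds ρ))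
    (hκ : Tendsto (fun N => κ N / N) atTop (nhds κL))
    (hlam : Tendsto (fun N => lam N / N) atTop (nhds lamL))
    (Z : ℕ → ℝ)
    (hZ : ∀ N, Z N = ∏ j ∈ Finset.Icc 1 (n N),
        Real.Gamma (j + 1) * Real.Gamma (j + κ N) * Real.Gamma (j + lam N) /
          Real.Gamma (j + n N + κ N + lam N))
    (B : ℝ → ℝ → ℝ)
    (hB : ∀ s t, B s t =
        (1 + s) ^ 2 / 2 * Real.log (1 + s) - s ^ 2 / 2 * Real.log s
          + (1 + t) ^ 2 / 2 * Real.log (1 + t) - t ^ 2 / 2 * Real.log t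
          - (2 + s + t) ^ 2 / 2 * Real.log (2 + s + t)
          + (1 + s + t) ^ 2 / 2 * Real.log (1 + s + t)) :
    Tendsto (fun N : ℕ => (1 / (N : ℝ) ^ 2) * Real.log (Z N)) atTop
      (nhds (ρ ^ 2 * B (κL / ρ) (lamL / ρ))) :=
  stmt7_general n κ lam hκ0 hlam0 ρ κL lamL hρ hn hκ hlam Z hZ B hB
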